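/- Every two-step PX attack (A2) contains a weak three: two simple threes (blocks of five aligned consecutive squares with three PX stones and two empty squares) intersecting in exactly one empty square. -/

import Mathlib

/- # A formal model of Gomoku patterns and restricted games -/

abbrev Square := ℤ × ℤ

inductive Cell
  | px | py | empty
deriving DecidableEq

/-- A pattern: a finite set of board squares together with their contents. -/
structure Pattern where
  dom : Finset Square
  val : Square → Cell

def Pattern.emptySquares (p : Pattern) : Finset Square :=
  p.dom.filter (fun s => p.val s = Cell.empty)

/-- Fill (or empty) a square of the pattern with the given content. -/
def Pattern.fill (p : Pattern) (s : Square) (c : Cell) : Pattern :=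
  ⟨p.dom, fun t => if t = s then c else p.val t⟩

/-- Remove a square from the pattern. -/
def Pattern.erase (p : Pattern) (s : Square) : Pattern :=
  ⟨p.dom.erase s, p.val⟩

/-- A PX pattern contains no PY stones. -/
def Pattern.isPX (p : Pattern) : Prop :=
  ∀ s ∈ p.dom, p.val s ≠ Cell.py

/-- The four alignment directions. -/
def dirs : List Square := [(1, 0), (0, 1), (1, 1), (1, -1)]

def shift (s d : Square) (i : ℕ) : Square :=
  (s.1 + (i : ℤ) * d.1, s.2 + (i : ℤ) * d.2)

/-- A block: five aligned consecutive squares starting at `s` in direction `d`. -/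
def blockSquares (s d : Square) : Finset Square :=
  (Finset.range 5).image (fun i => shift s d i)

/-- A line: nine aligned consecutive squares. -/
def lineSquares (s d : Square) : Finset Square :=
  (Finset.range 9).image (fun i => shift s d i)

def lineCenter (s d : Square) : Square := shift s d 4

/-- Five aligned consecutive stones of colour `c` inside the pattern. -/
def hasFive (p : Pattern) (c : Cell) : Prop :=
  ∃ s d, d ∈ dirs ∧ blockSquares s d ⊆ p.dom ∧ ∀ t ∈ blockSquares s d, p.val t = c

/-- `winsIn b n p`: in the game restricted to `p`, with PX to move iff `b`,
PX (playing optimally) forces a five-in-a-row within `n` further plies,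
against any play of PY. -/
def winsIn : Bool → ℕ → Pattern → Prop
  | _, 0, p => hasFive p Cell.px
  | true, n + 1, p =>
      hasFive p Cell.px ∨ (¬ hasFive p Cell.py ∧
        ∃ s ∈ p.emptySquares, winsIn false n (p.fill s Cell.px))
  | false, n + 1, p =>
      hasFive p Cell.px ∨ (¬ hasFive p Cell.py ∧ p.emptySquares.Nonempty ∧
        ∀ s ∈ p.emptySquares, winsIn true n (p.fill s Cell.py))

/-- PX wins the restricted game moving first. -/
def pxWinsFirst (p : Pattern) : Prop := ∃ n, winsIn true n p

/-- PX wins the restricted game moving second. -/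
def pxWinsSecond (p : Pattern) : Prop := ∃ n, winsIn false n p

/-- A PX victory: a PX pattern where PX wins moving first or second. -/
def isVictory (p : Pattern) : Prop := p.isPX ∧ pxWinsFirst p ∧ pxWinsSecond p

/-- A victory of `n` steps: PX, moving second, wins placing `n` stones
(i.e. within `2*n` plies) and no fewer. -/
def victorySteps (p : Pattern) (n : ℕ) : Prop :=
  isVictory p ∧ winsIn false (2 * n) p ∧ ∀ m < n, ¬ winsIn false (2 * m) p

/-- A trigger of a pattern: an empty square whose filling by PX yields a PX victory. -/
def isTrigger (p : Pattern) (s : Square) : Prop :=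
  s ∈ p.emptySquares ∧ isVictory (p.fill s Cell.px)

/-- A PX attack: a PX pattern, not a victory, with a trigger. -/
def isAttack (p : Pattern) : Prop :=
  p.isPX ∧ ¬ isVictory p ∧ ∃ s, isTrigger p s

/-- An attack of `n` steps: `n` is one plus the steps of the fastest victory
reachable by playing a trigger. -/
def attackSteps (p : Pattern) (n : ℕ) : Prop :=
  isAttack p ∧ 1 ≤ n ∧
  (∃ s, isTrigger p s ∧ victorySteps (p.fill s Cell.px) (n - 1)) ∧
  (∀ s m, isTrigger p s → victorySteps (p.fill s Cell.px) m → n - 1 ≤ m)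

/-- A PX threat: a PX pattern, neither victory nor attack, with an empty square
whose filling by PX yields a PX attack. -/
def isThreat (p : Pattern) : Prop :=
  p.isPX ∧ ¬ isVictory p ∧ ¬ isAttack p ∧
  ∃ s ∈ p.emptySquares, isAttack (p.fill s Cell.px)

/-- A threat of `n` steps: one plus the steps of the fastest reachable attack. -/
def threatSteps (p : Pattern) (n : ℕ) : Prop :=
  isThreat p ∧ 2 ≤ n ∧
  (∃ s ∈ p.emptySquares, attackSteps (p.fill s Cell.px) (n - 1)) ∧
  (∀ s ∈ p.emptySquares, ∀ m, attackSteps (p.fill s Cell.px) m → n - 1 ≤ m)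

/-- `q` is a sub-pattern of `p`. -/
def SubPattern (q p : Pattern) : Prop :=
  q.dom ⊆ p.dom ∧ ∀ s ∈ q.dom, q.val s = p.val s

/-- Two patterns are compatible if they agree on common squares. -/
def Compatible (p q : Pattern) : Prop :=
  ∀ s ∈ p.dom ∩ q.dom, p.val s = q.val s

/-- Union of two (compatible) patterns. -/
def Pattern.union (p q : Pattern) : Pattern :=
  ⟨p.dom ∪ q.dom, fun s => if s ∈ p.dom then p.val s else q.val s⟩

open Classical in
/-- The defence of an attack: the empty squares where PY, moving first in the
restricted game, can play to stop PX from winning. -/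
noncomputable def Defence (p : Pattern) : Finset Square :=
  p.emptySquares.filter (fun s => ¬ pxWinsFirst (p.fill s Cell.py))

/-- A simple five as a relative pattern: exactly one block, all PX stones. -/
def isS5Pattern (q : Pattern) : Prop :=
  ∃ s d, d ∈ dirs ∧ q.dom = blockSquares s d ∧ ∀ t ∈ q.dom, q.val t = Cell.px

/-- A simple four as a relative pattern: one block, four PX stones, one empty. -/
def isS4Pattern (q : Pattern) : Prop :=
  ∃ s d, d ∈ dirs ∧ q.dom = blockSquares s d ∧
    (q.dom.filter (fun t => q.val t = Cell.px)).card = 4 ∧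
    (q.dom.filter (fun t => q.val t = Cell.empty)).card = 1

/-- A simple three as a relative pattern: one block, three PX stones, two empty. -/
def isS3Pattern (q : Pattern) : Prop :=
  ∃ s d, d ∈ dirs ∧ q.dom = blockSquares s d ∧
    (q.dom.filter (fun t => q.val t = Cell.px)).card = 3 ∧
    (q.dom.filter (fun t => q.val t = Cell.empty)).card = 2

/-- A PX block of degree 4 on the board `p`: a block inside `p` with no PY
stones and exactly four PX stones. -/
def isPXBlock4 (p : Pattern) (t d : Square) : Prop :=
  blockSquares t d ⊆ p.dom ∧ (∀ u ∈ blockSquares t d, p.val u ≠ Cell.py) ∧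
  ((blockSquares t d).filter (fun u => p.val u = Cell.px)).card = 4

/-- A simple four for colour `c` on board `p`: a block inside `p` with four
stones of colour `c` and a single empty (trigger) square `g`. -/
def isSimpleFourBlock (p : Pattern) (c : Cell) (t d g : Square) : Prop :=
  d ∈ dirs ∧ blockSquares t d ⊆ p.dom ∧ g ∈ blockSquares t d ∧
  p.val g = Cell.empty ∧ ∀ u ∈ blockSquares t d, u ≠ g → p.val u = c

/-- A simple three for PX on board `p`: a block inside `p` with three PX
stones, two empty squares and no PY stones. -/
def isSimpleThreeBlock (p : Pattern) (t d : Square) : Prop :=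
  d ∈ dirs ∧ blockSquares t d ⊆ p.dom ∧ (∀ u ∈ blockSquares t d, p.val u ≠ Cell.py) ∧
  ((blockSquares t d).filter (fun u => p.val u = Cell.px)).card = 3 ∧
  ((blockSquares t d).filter (fun u => p.val u = Cell.empty)).card = 2

/-- The tracker vector of two blocks `A`, `B`: at each square, the number of
blocks among `A`, `B` in which that square is empty. -/
def tracker (p : Pattern) (A B : Finset Square) (t : Square) : ℕ :=
  (if t ∈ A ∧ p.val t = Cell.empty then 1 else 0) +
  (if t ∈ B ∧ p.val t = Cell.empty then 1 else 0)

/-- The pattern `+XXXX+`: six aligned consecutive squares, four PX stones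
flanked by two empty squares. -/
def d4pat : Pattern :=
  ⟨(Finset.range 6).image (fun i : ℕ => ((i : ℤ), (0 : ℤ))),
   fun s => if s = ((0 : ℤ), (0 : ℤ)) ∨ s = ((5 : ℤ), (0 : ℤ)) then Cell.empty else Cell.px⟩

/-- The pattern `XXXX+`: four aligned consecutive PX stones followed by one
empty square. -/
def s4pat : Pattern :=
  ⟨(Finset.range 5).image (fun i : ℕ => ((i : ℤ), (0 : ℤ))),
   fun s => if s = ((4 : ℤ), (0 : ℤ)) then Cell.empty else Cell.px⟩

/- Let `s` be a trigger of the two-step attack `p`, so that `q = p.fill s Cell.px` is a one-step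
victory. Whatever square `t` PY takes in `q`, PX completes a five; so `q` holds a four `B₁`
with empty gap `g₁`, and, after PY takes `g₁`, a second four `B₂` avoiding `g₁`, with gap `g₂`.
A four of `q` not containing `s` would already be a four of `p`, making `p` an attack of one
step; hence `s ∈ B₁ ∩ B₂`, and in `p` each `Bᵢ` is a simple three with empty squares `{s, gᵢ}`.
These two threes meet in the single empty square `s`. -/

section Fill

variable {p : Pattern} {s : Square} {c : Cell}

@[simp]
lemma Pattern.fill_val_self : (p.fill s c).val s = c := if_pos rfl

lemma Pattern.fill_val_of_ne {t : Square} (h : t ≠ s) : (p.fill s c).val t = p.val t := if_neg h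

lemma Pattern.mem_emptySquares : s ∈ p.emptySquares ↔ s ∈ p.dom ∧ p.val s = Cell.empty :=
  Finset.mem_filter

lemma Pattern.isPX.fill_px (hp : p.isPX) : (p.fill s Cell.px).isPX := by
  intro t ht
  by_cases hts : t = s
  · simp [hts]
  · rw [Pattern.fill_val_of_ne hts]; exact hp t ht

lemma notMem_of_forall_fill_val_eq {B : Finset Square} {c' : Cell} (hc : c ≠ c')
    (h : ∀ v ∈ B, (p.fill s c).val v = c') : s ∉ B :=
  fun hs => hc (by simpa using h s hs)

lemma hasFive_of_hasFive_fill {c' : Cell} (hc : c ≠ c') (h : hasFive (p.fill s c) c') :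
    hasFive p c' := by
  obtain ⟨a, d, hd, hsub, hall⟩ := h
  refine ⟨a, d, hd, hsub, fun v hv => ?_⟩
  have hvs : v ≠ s := fun hvs => notMem_of_forall_fill_val_eq hc hall (hvs ▸ hv)
  rw [← Pattern.fill_val_of_ne hvs]; exact hall v hv

end Fill

section SimpleFour

variable {p : Pattern} {c : Cell} {a d g : Square}

lemma hasFive_fill_of_isSimpleFourBlock (h : isSimpleFourBlock p c a d g) :
    hasFive (p.fill g c) c := by
  obtain ⟨hd, hsub, -, -, hfour⟩ := h
  refine ⟨a, d, hd, hsub, fun v hv => ?_⟩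
  by_cases hvg : v = g
  · simp [hvg]
  · rw [Pattern.fill_val_of_ne hvg]; exact hfour v hv hvg

lemma exists_isSimpleFourBlock_of_hasFive_fill (h5 : ¬ hasFive p c)
    (hg : g ∈ p.emptySquares) (h : hasFive (p.fill g c) c) :
    ∃ a d, isSimpleFourBlock p c a d g := by
  obtain ⟨a, d, hd, hsub, hall⟩ := h
  have hfour : ∀ v ∈ blockSquares a d, v ≠ g → p.val v = c := fun v hv hvg => by
    rw [← Pattern.fill_val_of_ne hvg]; exact hall v hv
  have hgB : g ∈ blockSquares a d := by
    by_contra hgB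
    exact h5 ⟨a, d, hd, hsub, fun v hv => hfour v hv fun hvg => hgB (hvg ▸ hv)⟩
  exact ⟨a, d, ⟨hd, hsub, hgB, (Pattern.mem_emptySquares.1 hg).2, hfour⟩⟩

lemma isSimpleFourBlock.of_fill {s : Square} {c' : Cell}
    (h : isSimpleFourBlock (p.fill s c') c a d g) (hs : s ∉ blockSquares a d) :
    isSimpleFourBlock p c a d g := by
  obtain ⟨hd, hsub, hgB, hg, hfour⟩ := h
  have hval : ∀ v ∈ blockSquares a d, (p.fill s c').val v = p.val v := fun v hv =>
    Pattern.fill_val_of_ne fun hvs => hs (hvs ▸ hv)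
  exact ⟨hd, hsub, hgB, hval g hgB ▸ hg, fun v hv hvg => hval v hv ▸ hfour v hv hvg⟩

lemma exists_isSimpleFourBlock_of_winsIn_one_fill_py (h5 : ¬ hasFive p Cell.px) {t : Square}
    (hw : winsIn true 1 (p.fill t Cell.py)) :
    ∃ a d g, isSimpleFourBlock p Cell.px a d g ∧ t ∉ blockSquares a d := by
  have h5t : ¬ hasFive (p.fill t Cell.py) Cell.px := fun h =>
    h5 (hasFive_of_hasFive_fill (by decide) h)
  obtain ⟨-, g, hg, hwin⟩ := (show hasFive (p.fill t Cell.py) Cell.px ∨ _ from hw).resolve_left h5t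
  obtain ⟨a, d, h4⟩ := exists_isSimpleFourBlock_of_hasFive_fill h5t hg hwin
  have htB : t ∉ blockSquares a d := by
    intro htB
    by_cases htg : t = g
    · simpa [htg] using h4.2.2.2.1
    · simpa using h4.2.2.2.2 t htB htg
  exact ⟨a, d, g, h4.of_fill htB, htB⟩

lemma exists_two_isSimpleFourBlock_of_victorySteps_one (h : victorySteps p 1) :
    ∃ a₁ d₁ g₁ a₂ d₂ g₂, isSimpleFourBlock p Cell.px a₁ d₁ g₁ ∧
      isSimpleFourBlock p Cell.px a₂ d₂ g₂ ∧ g₁ ∉ blockSquares a₂ d₂ := by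
  have h5 : ¬ hasFive p Cell.px := h.2.2 0 Nat.one_pos
  obtain ⟨-, ⟨t, ht⟩, hreply⟩ := (show hasFive p Cell.px ∨ _ from h.2.1).resolve_left h5
  obtain ⟨a₁, d₁, g₁, h₁, -⟩ := exists_isSimpleFourBlock_of_winsIn_one_fill_py h5 (hreply t ht)
  have hg₁ : g₁ ∈ p.emptySquares := Pattern.mem_emptySquares.2 ⟨h₁.2.1 h₁.2.2.1, h₁.2.2.2.1⟩
  obtain ⟨a₂, d₂, g₂, h₂, hg₁B⟩ := exists_isSimpleFourBlock_of_winsIn_one_fill_py h5 (hreply g₁ hg₁)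
  exact ⟨a₁, d₁, g₁, a₂, d₂, g₂, h₁, h₂, hg₁B⟩

lemma victorySteps_zero_of_hasFive (hp : p.isPX) (h5 : hasFive p Cell.px) : victorySteps p 0 :=
  ⟨⟨hp, ⟨0, h5⟩, ⟨0, h5⟩⟩, h5, fun _ hm => absurd hm (Nat.not_lt_zero _)⟩

lemma not_isSimpleFourBlock_of_attackSteps {n : ℕ} (hn : 2 ≤ n) (h : attackSteps p n) :
    ¬ isSimpleFourBlock p Cell.px a d g := by
  intro h4
  have hg : g ∈ p.emptySquares := Pattern.mem_emptySquares.2 ⟨h4.2.1 h4.2.2.1, h4.2.2.2.1⟩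
  have hv := victorySteps_zero_of_hasFive h.1.1.fill_px (hasFive_fill_of_isSimpleFourBlock h4)
  have := h.2.2.2 g 0 ⟨hg, hv.1⟩ hv
  omega

end SimpleFour

lemma card_blockSquares {a d : Square} (hd : d ∈ dirs) : (blockSquares a d).card = 5 := by
  have hd' : d.1 ≠ 0 ∨ d.2 ≠ 0 := by
    fin_cases hd <;> simp
  rw [blockSquares, Finset.card_image_of_injOn, Finset.card_range]
  intro i _ j _ hij
  simp only [shift, Prod.mk.injEq, add_right_inj] at hij
  rcases hd' with h | h
  · exact_mod_cast mul_right_cancel₀ h hij.1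
  · exact_mod_cast mul_right_cancel₀ h hij.2

section ThreeOfFour

variable {p : Pattern} {s a d g : Square}

lemma filter_empty_eq_pair_of_isSimpleFourBlock_fill (hs : p.val s = Cell.empty)
    (hsB : s ∈ blockSquares a d) (h : isSimpleFourBlock (p.fill s Cell.px) Cell.px a d g) :
    (blockSquares a d).filter (fun t => p.val t = Cell.empty) = {s, g} := by
  obtain ⟨-, -, hgB, hg, hfour⟩ := h
  ext v
  simp only [Finset.mem_filter, Finset.mem_insert, Finset.mem_singleton]
  constructor
  · rintro ⟨hv, hve⟩
    by_contra! hvsg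
    simpa [Pattern.fill_val_of_ne hvsg.1, hve] using hfour v hv hvsg.2
  · rintro (rfl | rfl)
    · exact ⟨hsB, hs⟩
    · have hvs : v ≠ s := by rintro rfl; simp at hg
      exact ⟨hgB, Pattern.fill_val_of_ne hvs ▸ hg⟩

lemma isS3Pattern_of_isSimpleFourBlock_fill (hs : p.val s = Cell.empty)
    (hsB : s ∈ blockSquares a d) (h : isSimpleFourBlock (p.fill s Cell.px) Cell.px a d g) :
    isS3Pattern ⟨blockSquares a d, p.val⟩ := by
  have hempty := filter_empty_eq_pair_of_isSimpleFourBlock_fill hs hsB h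
  obtain ⟨hd, -, -, hg, hfour⟩ := h
  have hgs : g ≠ s := by rintro rfl; simp at hg
  have hcard : ((blockSquares a d).filter (fun t => p.val t = Cell.empty)).card = 2 := by
    rw [hempty, Finset.card_pair hgs.symm]
  have hpx : (blockSquares a d).filter (fun t => p.val t = Cell.px) =
      (blockSquares a d).filter (fun t => ¬ p.val t = Cell.empty) := by
    refine Finset.filter_congr fun v hv => ?_
    by_cases hvs : v = s
    · simp [hvs, hs]
    by_cases hvg : v = g
    · rw [hvg, ← Pattern.fill_val_of_ne (hvg ▸ hvs), hg]
      decide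
    · have hv := hfour v hv hvg
      rw [Pattern.fill_val_of_ne hvs] at hv
      simp [hv]
  refine ⟨a, d, hd, rfl, ?_, hcard⟩
  show ((blockSquares a d).filter _).card = 3
  have := Finset.card_filter_add_card_filter_not (s := blockSquares a d)
    (fun t => p.val t = Cell.empty)
  rw [card_blockSquares hd, hcard] at this
  rw [hpx]
  omega

end ThreeOfFour

/-- Every two-step PX attack (A2) contains a weak three: two simple
threes intersecting in exactly one empty square. -/
theorem stmt8 (p : Pattern) (h : attackSteps p 2) :
    ∃ σ₁ σ₂ : Pattern, SubPattern σ₁ p ∧ SubPattern σ₂ p ∧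
      isS3Pattern σ₁ ∧ isS3Pattern σ₂ ∧ σ₁.dom ≠ σ₂.dom ∧
      ((σ₁.dom ∩ σ₂.dom).filter (fun t => p.val t = Cell.empty)).card = 1 := by
  obtain ⟨s, hs, hvic⟩ := h.2.2.1
  have hse : p.val s = Cell.empty := (Pattern.mem_emptySquares.1 hs.1).2
  obtain ⟨a₁, d₁, g₁, a₂, d₂, g₂, h₁, h₂, hg₁B₂⟩ :=
    exists_two_isSimpleFourBlock_of_victorySteps_one hvic
  have hsB : ∀ {a d g}, isSimpleFourBlock (p.fill s Cell.px) Cell.px a d g →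
      s ∈ blockSquares a d := fun h4 => by
    by_contra hsB
    exact not_isSimpleFourBlock_of_attackSteps le_rfl h (h4.of_fill hsB)
  refine ⟨⟨blockSquares a₁ d₁, p.val⟩, ⟨blockSquares a₂ d₂, p.val⟩,
    ⟨h₁.2.1, fun _ _ => rfl⟩, ⟨h₂.2.1, fun _ _ => rfl⟩,
    isS3Pattern_of_isSimpleFourBlock_fill hse (hsB h₁) h₁,
    isS3Pattern_of_isSimpleFourBlock_fill hse (hsB h₂) h₂,
    fun hB : blockSquares a₁ d₁ = blockSquares a₂ d₂ => hg₁B₂ (hB ▸ h₁.2.2.1), ?_⟩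
  have hg₁₂ : g₁ ≠ g₂ := fun hg => hg₁B₂ (hg ▸ h₂.2.2.1)
  rw [Finset.filter_inter_distrib, filter_empty_eq_pair_of_isSimpleFourBlock_fill hse (hsB h₁) h₁,
    filter_empty_eq_pair_of_isSimpleFourBlock_fill hse (hsB h₂) h₂, ← Finset.insert_inter_distrib,
    Finset.singleton_inter_of_notMem (by simpa using hg₁₂)]
  rfl
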